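/- arXiv:2106.13567 — 6 statements merged into one kernel-verified Lean document; each statement's English description precedes it below -/
import Mathlib

section
/- Let B be the Baumslag–Solitar group BS(2,3), given by the presentation ⟨a, t ∣ t⁻¹a²t = a³⟩. Then there is a (necessarily unique) group endomorphism φ : B → B with φ(a) = a² and φ(t) = t; this endomorphism is surjective but not injective: the element c := [a, t⁻¹at] of B satisfies φ(c) = 1 and c ≠ 1. In particular, B is non-Hopfian. -/
/-- The generator `a` of the Baumslag–Solitar group `BS(2,3)`,
as an element of the free group on `Bool` (`true ↦ a`, `false ↦ t`). -/
def bsA : FreeGroup Bool := FreeGroup.of true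

/-- The generator `t` of the Baumslag–Solitar group `BS(2,3)`. -/
def bsT : FreeGroup Bool := FreeGroup.of false

/-- The single relator `t⁻¹ a² t a⁻³` of `BS(2,3)`. -/
def bsRels : Set (FreeGroup Bool) := {bsT⁻¹ * bsA ^ 2 * bsT * bsA ^ (-3 : ℤ)}

/-- The Baumslag–Solitar group `BS(2,3) = ⟨a, t ∣ t⁻¹a²t = a³⟩`. -/
abbrev BS23 : Type := PresentedGroup bsRels

/-- The image of the generator `a` in `BS(2,3)`. -/
def aB : BS23 := PresentedGroup.of true

/-- The image of the generator `t` in `BS(2,3)`. -/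
def tB : BS23 := PresentedGroup.of false

/-- The commutator with the convention `[x, y] := x⁻¹y⁻¹xy`. -/
def pcomm {G : Type*} [Group G] (x y : G) : G := x⁻¹ * y⁻¹ * x * y

/-- The element `c := [a, t⁻¹at]` of `BS(2,3)`. -/
def cB : BS23 := pcomm aB (tB⁻¹ * aB * tB)

/-!
The relation `t⁻¹a²t = a³` gives `t⁻¹a⁴t = a⁶`, so `a ↦ a²`, `t ↦ t` defines `φ`. It is onto
because `a = a³a⁻² = φ(t⁻¹ata⁻¹)`, and `φ(c) = [a², t⁻¹a²t] = [a², a³] = 1`. To see `c ≠ 1`,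
let `B` act on `ℤ × ℤ` with `a` translating the first coordinate by `1` and `t` a bijection
conjugating translation by `3` into translation by `2`; then `c` moves `(0, 0)`.
-/

section

variable {G : Type*} [Group G]

theorem map_pcomm {H : Type*} [Group H] (f : G →* H) (x y : G) :
    f (pcomm x y) = pcomm (f x) (f y) := by
  simp only [pcomm, map_mul, map_inv]

theorem Commute.pcomm_eq_one {x y : G} (h : Commute x y) : pcomm x y = 1 := by
  rw [pcomm, mul_assoc _ x, h.eq]
  group

theorem bs_relation_sq {x y : G} (h : y⁻¹ * x ^ 2 * y = x ^ 3) :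
    y⁻¹ * (x ^ 2) ^ 2 * y = (x ^ 2) ^ 3 :=
  calc y⁻¹ * (x ^ 2) ^ 2 * y = (y⁻¹ * x ^ 2 * y) ^ 2 := by rw [sq (y⁻¹ * x ^ 2 * y)]; group
    _ = (x ^ 2) ^ 3 := by rw [h]; group

end

namespace BS23

section

variable {G : Type*} [Group G]

def lift (x y : G) (h : y⁻¹ * x ^ 2 * y = x ^ 3) : BS23 →* G :=
  PresentedGroup.toGroup (f := fun b => cond b x y) <| by
    rintro r rfl
    simp only [bsA, bsT, map_mul, map_inv, map_pow, map_zpow, FreeGroup.lift_apply_of, cond]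
    rw [h]
    group

variable {x y : G} {h : y⁻¹ * x ^ 2 * y = x ^ 3}

@[simp] theorem lift_aB : lift x y h aB = x := PresentedGroup.toGroup.of _

@[simp] theorem lift_tB : lift x y h tB = y := PresentedGroup.toGroup.of _

theorem hom_ext {f g : BS23 →* G} (ha : f aB = g aB) (ht : f tB = g tB) : f = g :=
  PresentedGroup.ext fun | true => ha | false => ht

end

theorem tB_inv_mul_aB_sq_mul_tB : tB⁻¹ * aB ^ 2 * tB = aB ^ 3 := by
  have h := PresentedGroup.one_of_mem (rels := bsRels) (Set.mem_singleton _)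
  simp only [bsA, bsT, map_mul, map_inv, map_pow, map_zpow, zpow_neg] at h
  exact mul_inv_eq_one.mp h

def phi : BS23 →* BS23 := lift (aB ^ 2) tB (bs_relation_sq tB_inv_mul_aB_sq_mul_tB)

theorem phi_surjective : Function.Surjective phi := fun g =>
  PresentedGroup.generated_by bsRels phi.range (fun
    | true => ⟨tB⁻¹ * aB * tB * aB⁻¹, show phi _ = aB by
        simp only [phi, map_mul, map_inv, lift_aB, lift_tB, tB_inv_mul_aB_sq_mul_tB]
        group⟩
    | false => ⟨tB, lift_tB⟩) g

theorem phi_cB : phi cB = 1 := by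
  simp only [cB, map_pcomm, map_mul, map_inv, phi, lift_aB, lift_tB, tB_inv_mul_aB_sq_mul_tB]
  exact (Commute.pow_pow_self aB 2 3).pcomm_eq_one

def aPerm : Equiv.Perm (ℤ × ℤ) := Equiv.addRight (1, 0)

/-- Writing `n = 3q + r` and `3k + r = 2k' + s` with `0 ≤ r < 3`, `0 ≤ s < 2`, this sends
`(n, k)` to `(2q + s, k')`. -/
def tPerm : Equiv.Perm (ℤ × ℤ) where
  toFun p := (2 * (p.1 / 3) + (3 * p.2 + p.1 % 3) % 2, (3 * p.2 + p.1 % 3) / 2)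
  invFun p := (3 * (p.1 / 2) + (2 * p.2 + p.1 % 2) % 3, (2 * p.2 + p.1 % 2) / 3)
  left_inv p := by simp only [Prod.ext_iff]; omega
  right_inv p := by simp only [Prod.ext_iff]; omega

theorem aPerm_pow_apply (n : ℕ) (p : ℤ × ℤ) : (aPerm ^ n) p = p + ((n : ℤ), 0) := by
  simp [aPerm]

theorem tPerm_add_three (p : ℤ × ℤ) : tPerm (p + (3, 0)) = tPerm p + (2, 0) := by
  simp only [tPerm, Equiv.coe_fn_mk, Prod.ext_iff, Prod.fst_add, Prod.snd_add]
  omega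

theorem tPerm_inv_mul_aPerm_sq_mul_tPerm : tPerm⁻¹ * aPerm ^ 2 * tPerm = aPerm ^ 3 := by
  rw [mul_assoc, inv_mul_eq_iff_eq_mul]
  ext1 p
  simp only [Equiv.Perm.mul_apply, aPerm_pow_apply]
  exact (tPerm_add_three p).symm

def permRep : BS23 →* Equiv.Perm (ℤ × ℤ) := lift aPerm tPerm tPerm_inv_mul_aPerm_sq_mul_tPerm

-- `c` dies in every finite quotient of `BS(2,3)`, so an infinite action is unavoidable.
theorem cB_ne_one : cB ≠ 1 := by
  have hc : permRep cB (0, 0) = (-4, 1) := by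
    simp only [cB, map_pcomm, map_mul, map_inv, permRep, lift_aB, lift_tB]
    decide
  intro h
  simp [h] at hc

end BS23

/-- There is a unique group endomorphism `φ` of `BS(2,3)` with `φ(a) = a²` and
`φ(t) = t`; it is surjective but not injective: `c = [a, t⁻¹at]` satisfies
`φ(c) = 1` and `c ≠ 1`. In particular, `BS(2,3)` is non-Hopfian. -/
theorem bs23_nonHopfian :
    ∃ φ : BS23 →* BS23,
      (φ aB = aB ^ 2 ∧ φ tB = tB) ∧
      (∀ ψ : BS23 →* BS23, ψ aB = aB ^ 2 → ψ tB = tB → ψ = φ) ∧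
      Function.Surjective φ ∧ ¬ Function.Injective φ ∧
      φ cB = 1 ∧ cB ≠ 1 := by
  open BS23 in
  refine ⟨phi, ⟨lift_aB, lift_tB⟩, fun ψ ha ht => ?_, phi_surjective, fun hinj => ?_,
    phi_cB, cB_ne_one⟩
  · exact hom_ext (ha.trans lift_aB.symm) (ht.trans lift_tB.symm)
  · exact cB_ne_one (hinj (phi_cB.trans (map_one phi).symm))
end

section
/- Let B = ⟨a, t ∣ t⁻¹a²t = a³⟩ be the Baumslag–Solitar group BS(2,3), let F be the subgroup of B generated by t and [a, t⁻¹at], and let φ : B → B be the endomorphism with φ(a) = a² and φ(t) = t. Then the sequence of subgroups (φ⁻ᵏ(F))_{k ∈ ℕ} is strictly increasing: for every k ∈ ℕ, the preimage subgroup φ⁻ᵏ(F) is strictly contained in φ⁻⁽ᵏ⁺¹⁾(F). -/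
/-- The subgroup `F = ⟨t, [a, t⁻¹at]⟩` of `BS(2,3)`. -/
def Fsub : Subgroup BS23 := Subgroup.closure {tB, cB}
/-- The `k`-fold composite `φ∘⋯∘φ` of an endomorphism `φ`. -/
def iterHom {G : Type*} [Group G] (φ : G →* G) : ℕ → (G →* G)
  | 0 => MonoidHom.id G
  | k + 1 => (iterHom φ k).comp φ

/-! The endomorphism `φ` kills `c = [a, t⁻¹at]`, since `φ c = [a², t⁻¹a²t] = [a², a³] = 1`, and it
is surjective, since `φ (t⁻¹at a⁻¹) = a³a⁻² = a`. Hence `φ(F) = ⟨t⟩`, which lies in `F` but misses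
`c`: the element `c` has `t`-exponent sum `0`, and it is nontrivial by Britton's lemma in the HNN
extension `⟨ℤ, s ∣ s (2n) s⁻¹ = 3n⟩`, which receives `BS(2,3)` via `a ↦ 1`, `t ↦ s⁻¹`.
For a surjective endomorphism, `φ(F) < F` gives `F < φ⁻¹(F)`, and pulling back along the
surjection `φᵏ` preserves strict inclusions. -/

open Subgroup Multiplicative

section Iterate

variable {G : Type*} [Group G] {φ : G →* G}

theorem Subgroup.lt_comap_of_map_lt (hφ : Function.Surjective φ) {H : Subgroup G}
    (h : H.map φ < H) : H < H.comap φ := by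
  refine lt_of_le_not_ge (map_le_iff_le_comap.1 h.le) fun hle => h.not_ge ?_
  calc H = (H.comap φ).map φ := (map_comap_eq_self_of_surjective hφ H).symm
    _ ≤ H.map φ := map_mono hle

theorem comap_iterHom_succ (H : Subgroup G) (k : ℕ) :
    H.comap (iterHom φ (k + 1)) = (H.comap (iterHom φ k)).comap φ :=
  (comap_comap H (iterHom φ k) φ).symm

theorem comap_iterHom_lt_comap_iterHom_succ (hφ : Function.Surjective φ) {H : Subgroup G}
    (h : H < H.comap φ) (k : ℕ) : H.comap (iterHom φ k) < H.comap (iterHom φ (k + 1)) := by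
  induction k with
  | zero => simpa only [comap_iterHom_succ, iterHom, MonoidHom.id_comp, comap_id] using h
  | succ k ih =>
    rw [comap_iterHom_succ _ (k + 1), comap_iterHom_succ _ k]
    exact (comap_lt_comap_of_surjective hφ).2 ih

end Iterate

theorem tB_inv_mul_aB_sq_mul_tB : tB⁻¹ * aB ^ 2 * tB = aB ^ 3 := by
  have h : tB⁻¹ * aB ^ 2 * tB * aB ^ (-3 : ℤ) = 1 :=
    PresentedGroup.one_of_mem (Set.mem_singleton _)
  rwa [zpow_neg, mul_inv_eq_one, zpow_ofNat] at h

section Lift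

variable {H : Type*} [Group H]

def liftBS23 (x y : H) (h : y⁻¹ * x ^ 2 * y = x ^ 3) : BS23 →* H :=
  PresentedGroup.toGroup (f := fun b => cond b x y) <| by
    rintro r rfl
    simp only [bsA, bsT, map_mul, map_inv, map_pow, map_zpow, FreeGroup.lift_apply_of, cond_true,
      cond_false, h]
    group

@[simp]
theorem liftBS23_aB {x y : H} (h : y⁻¹ * x ^ 2 * y = x ^ 3) : liftBS23 x y h aB = x :=
  PresentedGroup.toGroup.of _

@[simp]
theorem liftBS23_tB {x y : H} (h : y⁻¹ * x ^ 2 * y = x ^ 3) : liftBS23 x y h tB = y :=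
  PresentedGroup.toGroup.of _

end Lift

theorem ofAdd_mem_range_zpowersHom_iff {m n : ℤ} :
    ofAdd m ∈ (zpowersHom (Multiplicative ℤ) (ofAdd n)).range ↔ n ∣ m := by
  simp only [range_zpowersHom, mem_zpowers_iff, ← ofAdd_zsmul, ofAdd.injective.eq_iff,
    smul_eq_mul, dvd_def, eq_comm (a := m), mul_comm n]

theorem zpowersHom_ofAdd_injective {n : ℤ} (hn : n ≠ 0) :
    Function.Injective (zpowersHom (Multiplicative ℤ) (ofAdd n)) := by
  intro k l hkl
  simpa [zpowersHom_apply, ← ofAdd_zsmul, hn] using congrArg toAdd hkl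

/-- `2n ↦ 3n`. -/
noncomputable def twoThreeEquiv :
    (zpowersHom (Multiplicative ℤ) (ofAdd 2)).range ≃*
      (zpowersHom (Multiplicative ℤ) (ofAdd 3)).range :=
  (MonoidHom.ofInjective (zpowersHom_ofAdd_injective two_ne_zero)).symm.trans
    (MonoidHom.ofInjective (zpowersHom_ofAdd_injective three_ne_zero))

abbrev BS23HNN : Type := HNNExtension (Multiplicative ℤ) _ _ twoThreeEquiv

theorem twoThreeEquiv_ofInjective (k : Multiplicative ℤ) :
    twoThreeEquiv (MonoidHom.ofInjective (zpowersHom_ofAdd_injective two_ne_zero) k) =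
      MonoidHom.ofInjective (zpowersHom_ofAdd_injective three_ne_zero) k := by
  simp [twoThreeEquiv]

theorem BS23HNN.t_mul_of_ofAdd_two : (HNNExtension.t : BS23HNN) * HNNExtension.of (ofAdd 2) =
    HNNExtension.of (ofAdd 3) * HNNExtension.t := by
  have h := HNNExtension.t_mul_of (φ := twoThreeEquiv)
    (MonoidHom.ofInjective (zpowersHom_ofAdd_injective two_ne_zero) (ofAdd 1))
  rw [twoThreeEquiv_ofInjective] at h
  simpa [MonoidHom.ofInjective_apply] using h

noncomputable def toBS23HNN : BS23 →* BS23HNN :=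
  liftBS23 (HNNExtension.of (ofAdd 1)) HNNExtension.t⁻¹ <| by
    rw [inv_inv, ← map_pow HNNExtension.of, ← map_pow HNNExtension.of,
      show ofAdd (1 : ℤ) ^ 2 = ofAdd 2 from rfl, show ofAdd (1 : ℤ) ^ 3 = ofAdd 3 from rfl,
      BS23HNN.t_mul_of_ofAdd_two, mul_inv_cancel_right]

def cWord : HNNExtension.NormalWord.ReducedWord (Multiplicative ℤ)
    (zpowersHom (Multiplicative ℤ) (ofAdd 2)).range
    (zpowersHom (Multiplicative ℤ) (ofAdd 3)).range where
  head := ofAdd (-1)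
  toList := [(1, ofAdd (-1)), (-1, ofAdd 1), (1, ofAdd 1), (-1, 1)]
  chain := by
    simp only [List.isChain_cons_cons, List.isChain_singleton, and_true,
      HNNExtension.toSubgroup_one, HNNExtension.toSubgroup_neg_one, ofAdd_mem_range_zpowersHom_iff]
    decide

theorem toBS23HNN_cB : toBS23HNN cB = cWord.prod twoThreeEquiv := by
  simp only [toBS23HNN, cB, pcomm, mul_inv_rev, inv_inv, map_mul, map_inv, liftBS23_aB,
    liftBS23_tB, HNNExtension.NormalWord.ReducedWord.prod, cWord, ofAdd_neg, List.map_cons,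
    Units.val_one, Units.val_neg, zpow_one, zpow_neg, map_one, mul_one, List.map_nil,
    List.prod_cons, List.prod_nil]
  group

theorem cB_ne_one : cB ≠ 1 := by
  intro h
  have := HNNExtension.ReducedWord.toList_eq_nil_of_mem_of_range _ cWord
    (by rw [← toBS23HNN_cB, h, map_one]; exact one_mem _)
  simp [cWord] at this

def tExponent : BS23 →* Multiplicative ℤ :=
  liftBS23 1 (ofAdd 1) (by simp)

theorem cB_notMem_zpowers_tB : cB ∉ zpowers tB := by
  intro h
  obtain ⟨n, hn⟩ := mem_zpowers_iff.1 h
  have hn0 : n = 0 := by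
    simpa [tExponent, cB, pcomm, ← ofAdd_zsmul] using congrArg tExponent hn
  exact cB_ne_one (by rw [← hn, hn0, zpow_zero])

theorem zpowers_tB_lt_Fsub : zpowers tB < Fsub :=
  SetLike.lt_iff_le_and_exists.2
    ⟨zpowers_le.2 (subset_closure (by simp)), cB, subset_closure (by simp), cB_notMem_zpowers_tB⟩

section Endomorphism

variable {φ : BS23 →* BS23}

theorem map_cB_eq_one (ha : φ aB = aB ^ 2) (ht : φ tB = tB) : φ cB = 1 := by
  simp only [cB, pcomm, map_mul, map_inv, ha, ht, tB_inv_mul_aB_sq_mul_tB]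
  group

theorem surjective_of_map_aB_of_map_tB (ha : φ aB = aB ^ 2) (ht : φ tB = tB) :
    Function.Surjective φ := by
  rw [← MonoidHom.range_eq_top, eq_top_iff, ← PresentedGroup.closure_range_of, closure_le]
  rintro _ ⟨_ | _, rfl⟩
  · exact ⟨tB, ht⟩
  · change aB ∈ φ.range
    refine ⟨tB⁻¹ * aB * tB * aB⁻¹, ?_⟩
    have h : φ (tB⁻¹ * aB * tB * aB⁻¹) = tB⁻¹ * aB ^ 2 * tB * (aB ^ 2)⁻¹ := by
      simp only [map_mul, map_inv, ha, ht]
    rw [h, tB_inv_mul_aB_sq_mul_tB]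
    group

theorem map_Fsub_eq_zpowers_tB (ha : φ aB = aB ^ 2) (ht : φ tB = tB) :
    Fsub.map φ = zpowers tB := by
  rw [Fsub, MonoidHom.map_closure, Set.image_pair, ht, map_cB_eq_one ha ht, Set.pair_comm,
    closure_insert_one, zpowers_eq_closure]

end Endomorphism

/-- If `φ : BS(2,3) → BS(2,3)` is the endomorphism with `φ(a) = a²` and `φ(t) = t`,
then the sequence of preimage subgroups `(φ⁻ᵏ(F))_{k ∈ ℕ}` is strictly increasing:
for every `k`, `φ⁻ᵏ(F)` is strictly contained in `φ⁻⁽ᵏ⁺¹⁾(F)`. -/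
theorem preimages_strictly_increasing (φ : BS23 →* BS23)
    (ha : φ aB = aB ^ 2) (ht : φ tB = tB) :
    ∀ k : ℕ, Fsub.comap (iterHom φ k) < Fsub.comap (iterHom φ (k + 1)) := by
  have hφ := surjective_of_map_aB_of_map_tB ha ht
  refine comap_iterHom_lt_comap_iterHom_succ hφ (lt_comap_of_map_lt hφ ?_)
  rw [map_Fsub_eq_zpowers_tB ha ht]
  exact zpowers_tB_lt_Fsub
end

section
/- Let B = ⟨a, t ∣ t⁻¹a²t = a³⟩ be the Baumslag–Solitar group BS(2,3) and let F be the subgroup of B generated by t and [a, t⁻¹at]. Then the set of double cosets F\B/F is infinite. -/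
/-!
`BS(2,3)` acts on `ℚ` by affine maps, `a` as `x ↦ x + 1` and `t` as `x ↦ (2/3)x`: conjugating
the translation by `2` by this scaling gives the translation by `3`. Both `a` and `t⁻¹at` act
as translations, so the commutator `[a, t⁻¹at]` acts trivially and `F` acts through the scalings
`x ↦ (2/3)^m x`. These fix `0` and preserve the `5`-adic valuation, so `g ↦ v₅(g • 0)` is
constant on double cosets `FgF`, while `a^(5^n) • 0 = 5^n` has valuation `n`.
-/

theorem padicValRat_mul_of_eq_zero {p : ℕ} [Fact p.Prime] {c : ℚ} (hc0 : c ≠ 0)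
    (hc : padicValRat p c = 0) (q : ℚ) : padicValRat p (c * q) = padicValRat p q := by
  rcases eq_or_ne q 0 with rfl | hq
  · rw [mul_zero]
  · rw [padicValRat.mul hc0 hq, hc, zero_add]

theorem Equiv.mulLeft₀_zpow_apply {G₀ : Type*} [GroupWithZero G₀] (a : G₀) (ha : a ≠ 0) (m : ℤ)
    (x : G₀) : (Equiv.mulLeft₀ a ha ^ m) x = a ^ m * x := by
  change (MulAction.toPermHom G₀ˣ G₀ (Units.mk0 a ha) ^ m) x = _
  rw [← map_zpow, MulAction.toPermHom_apply, MulAction.toPerm_apply, Units.smul_def,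
    Units.val_zpow_eq_zpow_val, Units.val_mk0, smul_eq_mul]

theorem DoubleCoset.infinite_quotient_of_invariant {G α : Type*} [Group G] {H K : Subgroup G}
    (v : G → α) (hv : ∀ h ∈ H, ∀ k ∈ K, ∀ g, v (h * g * k) = v g)
    (hinf : (Set.range v).Infinite) : Infinite (DoubleCoset.Quotient (H : Set G) K) := by
  let v' : DoubleCoset.Quotient (H : Set G) K → α := Quotient.lift v fun a b hab => by
    obtain ⟨h, hh, k, hk, rfl⟩ := DoubleCoset.rel_iff.1 hab
    exact (hv h hh k hk a).symm
  have hrange : Set.range v' = Set.range v :=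
    Set.range_quotient_lift (s := DoubleCoset.setoid _ _) _
  by_contra hfin
  rw [not_infinite_iff_finite] at hfin
  exact hinf (hrange ▸ Set.finite_range v')

namespace BS23

noncomputable def scaleTwoThirds : Equiv.Perm ℚ := Equiv.mulLeft₀ (2 / 3) (by norm_num)

noncomputable def generatorAction (b : Bool) : Equiv.Perm ℚ :=
  if b then Equiv.addRight 1 else scaleTwoThirds

theorem generatorAction_rel : ∀ r ∈ bsRels, FreeGroup.lift generatorAction r = 1 := by
  rintro r rfl
  ext x
  simp only [bsT, bsA, zpow_neg, zpow_ofNat, map_mul, map_inv, map_pow, FreeGroup.lift_apply_of,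
    generatorAction, Bool.false_eq_true, ↓reduceIte, scaleTwoThirds, Equiv.nsmul_addRight,
    Equiv.neg_addRight, Equiv.Perm.mul_apply, Equiv.coe_addRight, Equiv.mulLeft₀_apply,
    Equiv.Perm.coe_inv, Equiv.mulLeft₀_symm_apply, Equiv.Perm.coe_one, id_eq]
  ring

noncomputable def affineAction : BS23 →* Equiv.Perm ℚ :=
  PresentedGroup.toGroup generatorAction_rel

theorem affineAction_aB : affineAction aB = Equiv.addRight 1 := PresentedGroup.toGroup.of _

theorem affineAction_tB : affineAction tB = scaleTwoThirds := PresentedGroup.toGroup.of _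

theorem affineAction_cB : affineAction cB = 1 := by
  have hconj : affineAction (tB⁻¹ * aB * tB) = Equiv.addRight (3 / 2) := by
    ext x
    simp only [map_mul, map_inv, affineAction_tB, scaleTwoThirds, affineAction_aB,
      Equiv.Perm.mul_apply, Equiv.mulLeft₀_apply, Equiv.coe_addRight, Equiv.Perm.coe_inv,
      Equiv.mulLeft₀_symm_apply]
    ring
  rw [cB, pcomm, map_mul, map_mul, map_mul, map_inv, map_inv, hconj, affineAction_aB]
  ext x
  simp only [Equiv.neg_addRight, Equiv.Perm.mul_apply, Equiv.coe_addRight, Equiv.Perm.coe_one,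
    id_eq]
  ring

theorem Fsub_le_comap_zpowers :
    Fsub ≤ (Subgroup.zpowers scaleTwoThirds).comap affineAction := by
  rw [Fsub, Subgroup.closure_le, Set.insert_subset_iff, Set.singleton_subset_iff]
  refine ⟨?_, ?_⟩
  · rw [SetLike.mem_coe, Subgroup.mem_comap, affineAction_tB]
    exact Subgroup.mem_zpowers _
  · rw [SetLike.mem_coe, Subgroup.mem_comap, affineAction_cB]
    exact one_mem _

theorem affineAction_apply_of_mem_Fsub {f : BS23} (hf : f ∈ Fsub) :
    ∃ m : ℤ, ∀ x, affineAction f x = (2 / 3) ^ m * x := by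
  obtain ⟨m, hm⟩ := Subgroup.mem_zpowers_iff.1 (Fsub_le_comap_zpowers hf)
  exact ⟨m, fun x => by rw [← hm, scaleTwoThirds, Equiv.mulLeft₀_zpow_apply]⟩

noncomputable def fiveAdicInvariant (g : BS23) : ℤ := padicValRat 5 (affineAction g 0)

theorem fiveAdicInvariant_mul_mul {f g k : BS23} (hf : f ∈ Fsub) (hk : k ∈ Fsub) :
    fiveAdicInvariant (f * g * k) = fiveAdicInvariant g := by
  have : Fact (Nat.Prime 5) := ⟨by norm_num⟩
  obtain ⟨m, hm⟩ := affineAction_apply_of_mem_Fsub hf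
  obtain ⟨n, hn⟩ := affineAction_apply_of_mem_Fsub hk
  have hv : padicValRat 5 (2 / 3) = 0 := by
    rw [padicValRat.div two_ne_zero three_ne_zero]
    simp [padicValRat, padicValInt, padicValNat.eq_zero_of_not_dvd]
  have hvm : padicValRat 5 ((2 / 3) ^ m) = 0 := by rw [padicValRat.zpow, hv, mul_zero]
  rw [fiveAdicInvariant, map_mul, map_mul, Equiv.Perm.mul_apply, Equiv.Perm.mul_apply, hn,
    mul_zero, hm, padicValRat_mul_of_eq_zero (zpow_ne_zero _ (by norm_num)) hvm, fiveAdicInvariant]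

theorem fiveAdicInvariant_aB_pow (n : ℕ) : fiveAdicInvariant (aB ^ 5 ^ n) = n := by
  have : Fact (Nat.Prime 5) := ⟨by norm_num⟩
  rw [fiveAdicInvariant, map_pow, affineAction_aB, Equiv.nsmul_addRight, Equiv.coe_addRight]
  beta_reduce
  rw [zero_add, nsmul_one, Nat.cast_pow, padicValRat.pow, padicValRat.self (by norm_num), mul_one]

end BS23

/-- The set of double cosets `F \ BS(2,3) / F`, where `F = ⟨t, [a, t⁻¹at]⟩`,
is infinite. -/
theorem doubleCosets_infinite :
    Infinite (DoubleCoset.Quotient (Fsub : Set BS23) (Fsub : Set BS23)) := by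
  refine DoubleCoset.infinite_quotient_of_invariant BS23.fiveAdicInvariant
    (fun f hf k hk _ => BS23.fiveAdicInvariant_mul_mul hf hk) ?_
  exact Set.infinite_of_injective_forall_mem Nat.cast_injective fun n =>
    ⟨aB ^ 5 ^ n, BS23.fiveAdicInvariant_aB_pow n⟩
end

section
/- Let Γ be a group and let m(Γ) = ⟨Γ; s, d ∣ d⁻¹gd = g·s⁻¹gs and [g, s⁻¹hs] = 1 for all g, h ∈ Γ⟩ be its standard mitosis. Then the assignment s ↦ x, d ↦ y, g ↦ 1 (for g ∈ Γ) extends to a well-defined surjective group homomorphism from m(Γ) onto the free group F₂ on two generators x, y; consequently, the subgroup of m(Γ) generated by (the images of) s and d is a free group of rank 2, freely generated by s and d. In particular, m(Γ) contains a non-abelian free subgroup. -/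
/-- The generator of the standard mitosis corresponding to `g ∈ Γ`,
as an element of the free group on `Γ ⊕ Bool` (`inr true ↦ s`, `inr false ↦ d`). -/
def mGen {Γ : Type*} [Group Γ] (g : Γ) : FreeGroup (Γ ⊕ Bool) :=
  FreeGroup.of (Sum.inl g)

/-- The extra generator `s` of the standard mitosis. -/
def mS (Γ : Type*) [Group Γ] : FreeGroup (Γ ⊕ Bool) := FreeGroup.of (Sum.inr true)

/-- The extra generator `d` of the standard mitosis. -/
def mD (Γ : Type*) [Group Γ] : FreeGroup (Γ ⊕ Bool) := FreeGroup.of (Sum.inr false)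

/-- The relators of the standard mitosis
`m(Γ) = ⟨Γ; s, d ∣ d⁻¹gd = g·s⁻¹gs, [g, s⁻¹hs] = 1 for all g, h ∈ Γ⟩`:
all relations holding in `Γ` among the generators coming from `Γ`, together with
the relators `d⁻¹gd·(g·s⁻¹gs)⁻¹` and `[g, s⁻¹hs]` for all `g, h ∈ Γ`. -/
def mitosisRels (Γ : Type*) [Group Γ] : Set (FreeGroup (Γ ⊕ Bool)) :=
  ((FreeGroup.map Sum.inl : FreeGroup Γ →* FreeGroup (Γ ⊕ Bool)) ''
      {w : FreeGroup Γ | FreeGroup.lift (id : Γ → Γ) w = 1})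
    ∪ {r | ∃ g : Γ, r = (mD Γ)⁻¹ * mGen g * mD Γ * (mGen g * (mS Γ)⁻¹ * mGen g * mS Γ)⁻¹}
    ∪ {r | ∃ g h : Γ, r = pcomm (mGen g) ((mS Γ)⁻¹ * mGen h * mS Γ)}

/-- The standard mitosis `m(Γ)` of a group `Γ`, as a presented group. -/
abbrev Mitosis (Γ : Type*) [Group Γ] : Type _ := PresentedGroup (mitosisRels Γ)

/-- The image in `m(Γ)` of the generator corresponding to `g ∈ Γ`. -/
def mGenM {Γ : Type*} [Group Γ] (g : Γ) : Mitosis Γ := PresentedGroup.of (Sum.inl g)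

/-- The image of the generator `s` in `m(Γ)`. -/
def mSM (Γ : Type*) [Group Γ] : Mitosis Γ := PresentedGroup.of (Sum.inr true)

/-- The image of the generator `d` in `m(Γ)`. -/
def mDM (Γ : Type*) [Group Γ] : Mitosis Γ := PresentedGroup.of (Sum.inr false)

/-- Killing `Γ` and sending `s, d` to the two free generators yields a
well-defined surjective homomorphism `m(Γ) → F₂`; consequently the subgroup of
`m(Γ)` generated by `s` and `d` is free of rank `2`, freely generated by `s`
and `d` (the homomorphism from the free group on two generators sending the
free generators to `s` and `d` is injective with range `⟨s, d⟩`). In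
particular, `m(Γ)` contains a non-abelian free subgroup. -/
theorem mitosis_surjects_onto_F2 (Γ : Type*) [Group Γ] :
    ∃ π : Mitosis Γ →* FreeGroup Bool,
      π (mSM Γ) = FreeGroup.of true ∧
      π (mDM Γ) = FreeGroup.of false ∧
      (∀ g : Γ, π (mGenM g) = 1) ∧
      Function.Surjective π ∧
      Function.Injective (FreeGroup.lift (fun b : Bool => if b then mSM Γ else mDM Γ)) ∧
      (FreeGroup.lift (fun b : Bool => if b then mSM Γ else mDM Γ)).range
        = Subgroup.closure {mSM Γ, mDM Γ} := by
  classical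
  set f : Γ ⊕ Bool → FreeGroup Bool := Sum.elim (fun _ => 1) FreeGroup.of with hf
  have hrel : ∀ r ∈ mitosisRels Γ, FreeGroup.lift f r = 1 := by
    rintro r ((⟨w, -, rfl⟩ | ⟨g, rfl⟩) | ⟨g, h, rfl⟩)
    · have : (FreeGroup.lift f).comp (FreeGroup.map Sum.inl) =
        (1 : FreeGroup Γ →* FreeGroup Bool) := by
        apply FreeGroup.ext_hom
        intro g
        simp [hf]
      exact congrArg (fun φ => φ w) this
    · simp [hf, mGen, mS, mD]
    · simp [hf, pcomm, mGen, mS, mD]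
  refine ⟨PresentedGroup.toGroup hrel, ?_, ?_, ?_, ?_, ?_, ?_⟩
  · exact PresentedGroup.toGroup.of hrel
  · exact PresentedGroup.toGroup.of hrel
  · intro g; exact PresentedGroup.toGroup.of hrel
  all_goals {
    set π := PresentedGroup.toGroup hrel
    set σ := FreeGroup.lift (fun b : Bool => if b then mSM Γ else mDM Γ) with hσ
    have hcomp : π.comp σ = MonoidHom.id (FreeGroup Bool) := by
      apply FreeGroup.ext_hom
      intro b
      cases b <;>
        simp [hσ, mSM, mDM, hf, π, PresentedGroup.toGroup.of hrel]
    have hli : Function.LeftInverse π σ := fun x => congrArg (fun φ => φ x) hcomp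
    first
    | exact fun y => ⟨σ y, hli y⟩
    | exact hli.injective
    | { rw [FreeGroup.range_lift_eq_closure]
        congr 1
        ext x
        constructor
        · rintro ⟨b, rfl⟩; cases b <;> simp [mSM, mDM]
        · rintro (rfl | rfl)
          exacts [⟨true, by simp⟩, ⟨false, by simp⟩] }
  }
end

section
/- There exists a family of groups (K_P), indexed by the subsets P of the set of prime numbers, such that: each K_P is generated by two elements; and for every prime p, K_P contains an element of order p if and only if p ∈ P. In particular, the groups K_P are pairwise non-isomorphic, so there exist continuum many (2^ℵ₀) pairwise non-isomorphic 2-generator groups. -/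
/-!
Let `R = ∏_{p ∈ P} ℤ/p`, let `H` be the Heisenberg group over `R`, and let `K_P` be the subgroup
of the lamplighter-type group `H ≀ ℤ` generated by the shift `t` and the configuration `x` with
`x 0 = (1, 0, 0)` and `x k = (0, e_k, 0)`, where `e_k ∈ R` is the indicator of the prime `k`.
An element of prime order `q` in `H ≀ ℤ` has trivial `ℤ`-coordinate, so it lives in `H^ℤ`, and
an element of prime order in `H` forces `q`-torsion in `R`; hence `q ∈ P`. Conversely, all
values of `x` and of its translate `t^p x t^{-p}` have the form `(0, b, 0)`, and these commute,
except `(1, 0, 0)` at `0` and at `p`. No prime is negative, so only position `p` contributes to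
the commutator of the two, which is therefore the central element `(0, 0, e_p)` placed at `p`,
of order `p`.
-/

open scoped commutatorElement

/-- `⟨a, b, c⟩` is the unitriangular matrix `!![1, a, c; 0, 1, b; 0, 0, 1]`. -/
@[ext]
structure Heisenberg (R : Type*) where
  a : R
  b : R
  c : R

namespace Heisenberg

variable {R : Type*} [Ring R]

instance : Mul (Heisenberg R) := ⟨fun x y => ⟨x.a + y.a, x.b + y.b, x.c + y.c + x.a * y.b⟩⟩
instance : One (Heisenberg R) := ⟨⟨0, 0, 0⟩⟩
instance : Inv (Heisenberg R) := ⟨fun x => ⟨-x.a, -x.b, -x.c + x.a * x.b⟩⟩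

@[simp] lemma mul_a (x y : Heisenberg R) : (x * y).a = x.a + y.a := rfl
@[simp] lemma mul_b (x y : Heisenberg R) : (x * y).b = x.b + y.b := rfl
@[simp] lemma mul_c (x y : Heisenberg R) : (x * y).c = x.c + y.c + x.a * y.b := rfl
@[simp] lemma one_a : (1 : Heisenberg R).a = 0 := rfl
@[simp] lemma one_b : (1 : Heisenberg R).b = 0 := rfl
@[simp] lemma one_c : (1 : Heisenberg R).c = 0 := rfl
@[simp] lemma inv_a (x : Heisenberg R) : x⁻¹.a = -x.a := rfl
@[simp] lemma inv_b (x : Heisenberg R) : x⁻¹.b = -x.b := rfl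
@[simp] lemma inv_c (x : Heisenberg R) : x⁻¹.c = -x.c + x.a * x.b := rfl

instance : Group (Heisenberg R) where
  mul_assoc x y z := by ext <;> simp only [mul_a, mul_b, mul_c, mul_add, add_mul] <;> abel
  one_mul x := by ext <;> simp
  mul_one x := by ext <;> simp
  inv_mul_cancel x := by ext <;> simp [neg_mul]

lemma pow_eq (x : Heisenberg R) (n : ℕ) :
    x ^ n = ⟨n • x.a, n • x.b, n • x.c + n.choose 2 • (x.a * x.b)⟩ := by
  induction n with
  | zero => ext <;> simp
  | succ n ih =>
    rw [pow_succ, ih, Nat.choose_succ_succ, Nat.choose_one_right]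
    ext <;> simp only [mul_a, mul_b, mul_c, succ_nsmul, add_nsmul, smul_mul_assoc]
    abel

lemma commutatorElement_eq (x y : Heisenberg R) :
    ⁅x, y⁆ = ⟨0, 0, x.a * y.b - y.a * x.b⟩ := by
  ext <;> simp only [commutatorElement_def, mul_a, mul_b, mul_c, inv_a, inv_b, inv_c,
    add_mul, mul_neg, neg_mul] <;> abel

def ofCenter : Multiplicative R →* Heisenberg R where
  toFun r := ⟨0, 0, r.toAdd⟩
  map_one' := rfl
  map_mul' _ _ := by ext <;> simp

@[simp] lemma ofCenter_apply (r : Multiplicative R) : ofCenter r = ⟨0, 0, r.toAdd⟩ := rfl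

lemma ofCenter_injective : Function.Injective (ofCenter (R := R)) := fun _ _ h =>
  congrArg Heisenberg.c h

lemma eq_one_of_pow_eq_one {n : ℕ} (hR : ∀ r : R, n • r = 0 → r = 0) {x : Heisenberg R}
    (hx : x ^ n = 1) : x = 1 := by
  rw [pow_eq] at hx
  have ha : x.a = 0 := hR _ (congrArg Heisenberg.a hx)
  have hb : x.b = 0 := hR _ (congrArg Heisenberg.b hx)
  have hc : x.c = 0 := hR _ (by simpa [ha] using congrArg Heisenberg.c hx)
  ext <;> assumption

end Heisenberg

namespace RegularWreathProduct

variable {D Q : Type*} [Group D] [Group Q]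

def ofLeft : (Q → D) →* D ≀ᵣ Q where
  toFun f := ⟨f, 1⟩
  map_one' := rfl
  map_mul' _ _ := by ext <;> simp

@[simp] lemma left_ofLeft (f : Q → D) : (ofLeft f).left = f := rfl
@[simp] lemma right_ofLeft (f : Q → D) : (ofLeft f).right = 1 := rfl

lemma ofLeft_injective : Function.Injective (ofLeft (D := D) (Q := Q)) := fun _ _ h =>
  congrArg left h

lemma inl_mul_ofLeft_mul_inv (q : Q) (f : Q → D) :
    inl q * ofLeft f * (inl q)⁻¹ = ofLeft fun x => f (q⁻¹ * x) := by
  ext <;> simp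

lemma eq_one_of_pow_eq_one {n : ℕ} (hD : ∀ d : D, d ^ n = 1 → d = 1)
    (hQ : ∀ q : Q, q ^ n = 1 → q = 1) {x : D ≀ᵣ Q} (hx : x ^ n = 1) : x = 1 := by
  have hright : x.right = 1 :=
    hQ _ (by simpa only [map_pow, map_one, rightHom_eq_right] using congrArg rightHom hx)
  have hx_eq : x = ofLeft x.left := by ext <;> simp [hright]
  rw [hx_eq, ← map_pow, ← map_one ofLeft] at hx
  have hleft : x.left = 1 := funext fun k => hD _ (congrFun (ofLeft_injective hx) k)
  rw [hx_eq, hleft, map_one]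

end RegularWreathProduct

@[simp] lemma Pi.commutatorElement_apply {ι : Type*} {G : ι → Type*} [∀ i, Group (G i)]
    (f g : ∀ i, G i) (i : ι) : ⁅f, g⁆ i = ⁅f i, g i⁆ := rfl

namespace HeisenbergWreath

open RegularWreathProduct Heisenberg Multiplicative

variable {R : Type*} [Ring R]

def shift : Heisenberg R ≀ᵣ Multiplicative ℤ := inl (ofAdd 1)

def lamp (β : ℤ → R) : Heisenberg R ≀ᵣ Multiplicative ℤ :=
  ofLeft fun k => ⟨if k.toAdd = 0 then 1 else 0, β k.toAdd, 0⟩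

lemma commutatorElement_conj_lamp (β : ℤ → R) (n : ℤ) (hβ : β (-n) = 0) :
    ⁅shift ^ n * lamp β * (shift ^ n)⁻¹, lamp β⁆ =
      ofLeft (Pi.mulSingle (ofAdd n) (ofCenter (ofAdd (β n)))) := by
  rw [shift, ← map_zpow, ← ofAdd_zsmul, smul_eq_mul, mul_one, lamp, inl_mul_ofLeft_mul_inv,
    ← map_commutatorElement]
  congr 1
  funext k
  induction k using Multiplicative.rec with | ofAdd m => ?_
  simp only [Pi.commutatorElement_apply, Heisenberg.commutatorElement_eq, toAdd_mul, toAdd_inv,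
    toAdd_ofAdd, Pi.mulSingle_apply, EmbeddingLike.apply_eq_iff_eq]
  by_cases hm : m = n
  · subst hm
    ext <;> simp
    rintro rfl
    simpa using hβ
  · ext <;> simp [hm, show -n + m ≠ 0 by omega]
    rintro rfl
    simpa using hβ

lemma exists_mem_closure_orderOf_eq (β : ℤ → R) (n : ℤ) (hβ : β (-n) = 0) :
    ∃ g ∈ Subgroup.closure {shift, lamp β}, orderOf g = addOrderOf (β n) := by
  have hshift : shift ∈ Subgroup.closure {shift, lamp β} :=
    Subgroup.subset_closure (Set.mem_insert _ _)
  have hlamp : lamp β ∈ Subgroup.closure {shift, lamp β} :=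
    Subgroup.subset_closure (Set.mem_insert_of_mem _ rfl)
  have hconj := mul_mem (mul_mem (zpow_mem hshift n) hlamp) (inv_mem (zpow_mem hshift n))
  refine ⟨_, mul_mem (mul_mem (mul_mem hconj hlamp) (inv_mem hconj)) (inv_mem hlamp), ?_⟩
  rw [← commutatorElement_def, commutatorElement_conj_lamp β n hβ,
    orderOf_injective _ ofLeft_injective, orderOf_piMulSingle,
    orderOf_injective _ ofCenter_injective, orderOf_ofAdd_eq_addOrderOf]

lemma eq_one_of_pow_eq_one {n : ℕ} (hn : n ≠ 0) (hR : ∀ r : R, n • r = 0 → r = 0)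
    {x : Heisenberg R ≀ᵣ Multiplicative ℤ} (hx : x ^ n = 1) : x = 1 :=
  RegularWreathProduct.eq_one_of_pow_eq_one (fun _ => Heisenberg.eq_one_of_pow_eq_one hR)
    (fun _ h => (pow_eq_one_iff.1 h).resolve_right hn) hx

end HeisenbergWreath

abbrev ZModPi (P : Set Nat.Primes) : Type := (p : P) → ZMod ((p : Nat.Primes) : ℕ)

def primeIndicator (P : Set Nat.Primes) (k : ℤ) : ZModPi P :=
  fun q => if (((q : Nat.Primes) : ℕ) : ℤ) = k then 1 else 0

lemma primeIndicator_neg (P : Set Nat.Primes) (p : Nat.Primes) :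
    primeIndicator P (-(p : ℕ)) = 0 := by
  funext q
  simp only [primeIndicator, Pi.zero_apply, ite_eq_right_iff]
  intro h
  have := q.1.2.pos
  omega

lemma addOrderOf_primeIndicator {P : Set Nat.Primes} {p : Nat.Primes} (hp : p ∈ P) :
    addOrderOf (primeIndicator P (p : ℕ)) = p := by
  have := Fact.mk p.2
  refine addOrderOf_eq_prime ?_ ?_
  · funext q
    simp only [primeIndicator, Pi.smul_apply, Pi.zero_apply, Nat.cast_inj]
    split_ifs with h
    · rw [nsmul_eq_mul, mul_one, ← h, ZMod.natCast_self]
    · exact smul_zero _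
  · intro h
    have := congrFun h ⟨p, hp⟩
    simp [primeIndicator] at this

lemma ZModPi.eq_zero_of_nsmul_eq_zero {P : Set Nat.Primes} {q : Nat.Primes} (hq : q ∉ P)
    (r : ZModPi P) (hr : (q : ℕ) • r = 0) : r = 0 := by
  funext p
  have hunit : IsUnit ((q : ℕ) : ZMod ((p : Nat.Primes) : ℕ)) := by
    refine (ZMod.isUnit_iff_coprime _ _).2 ((Nat.coprime_primes q.2 p.1.2).2 fun h => ?_)
    exact hq (Subtype.ext h ▸ p.2)
  exact hunit.mul_right_eq_zero.1 (by simpa [nsmul_eq_mul] using congrFun hr p)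

theorem MulEquiv.exists_orderOf_eq_iff {G H : Type*} [Monoid G] [Monoid H] (e : G ≃* H)
    (n : ℕ) : (∃ g : G, orderOf g = n) ↔ ∃ h : H, orderOf h = n :=
  ⟨fun ⟨g, hg⟩ => ⟨e g, (e.orderOf_eq g).trans hg⟩,
    fun ⟨h, hh⟩ => ⟨e.symm h, (e.symm.orderOf_eq h).trans hh⟩⟩

theorem MulEquiv.closure_pair_eq_top {G H : Type*} [Group G] [Group H] (e : G ≃* H) {x y : G}
    (h : Subgroup.closure {x, y} = ⊤) : Subgroup.closure {e x, e y} = ⊤ := by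
  have := MonoidHom.map_closure (e : G →* H) {x, y}
  rwa [h, Subgroup.map_top_of_surjective _ e.surjective, Set.image_pair, eq_comm] at this

theorem Subgroup.exists_closure_pair_eq_top {G : Type*} [Group G] (x y : G) :
    ∃ x' y' : closure {x, y}, closure {x', y'} = ⊤ := by
  refine ⟨⟨x, subset_closure (Set.mem_insert _ _)⟩,
    ⟨y, subset_closure (Set.mem_insert_of_mem _ rfl)⟩, ?_⟩
  convert closure_closure_coe_preimage (k := {x, y})
  ext
  simp [Subtype.ext_iff]

open HeisenbergWreath in
def twoGeneratorGroup (P : Set Nat.Primes) :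
    Subgroup (Heisenberg (ZModPi P) ≀ᵣ Multiplicative ℤ) :=
  Subgroup.closure {shift, lamp (primeIndicator P)}

theorem exists_closure_pair_eq_top_twoGeneratorGroup (P : Set Nat.Primes) :
    ∃ x y : twoGeneratorGroup P, Subgroup.closure {x, y} = ⊤ :=
  Subgroup.exists_closure_pair_eq_top _ _

open HeisenbergWreath in
theorem twoGeneratorGroup_exists_orderOf_eq_iff (P : Set Nat.Primes) (p : Nat.Primes) :
    (∃ g : twoGeneratorGroup P, orderOf g = p) ↔ p ∈ P := by
  constructor
  · rintro ⟨g, hg⟩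
    by_contra hp
    have hg1 : (g : Heisenberg (ZModPi P) ≀ᵣ Multiplicative ℤ) = 1 :=
      eq_one_of_pow_eq_one p.2.ne_zero (ZModPi.eq_zero_of_nsmul_eq_zero hp)
        (by rw [← hg, ← Subgroup.orderOf_coe]; exact pow_orderOf_eq_one _)
    rw [← Subgroup.orderOf_coe, hg1, orderOf_one] at hg
    exact p.2.one_lt.ne hg
  · intro hp
    obtain ⟨g, hmem, hg⟩ :=
      exists_mem_closure_orderOf_eq (primeIndicator P) (p : ℕ) (primeIndicator_neg P p)
    exact ⟨⟨g, hmem⟩,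
      (Subgroup.orderOf_mk g hmem).trans (hg.trans (addOrderOf_primeIndicator hp))⟩

/-- There is a family of groups `(K_P)`, indexed by the sets `P` of prime
numbers, such that each `K_P` is generated by two elements and, for every
prime `p`, `K_P` contains an element of order `p` if and only if `p ∈ P`.
In particular, the `K_P` are pairwise non-isomorphic, so there exist continuum
many pairwise non-isomorphic 2-generator groups. -/
theorem continuum_many_two_generator_groups :
    ∃ K : Set Nat.Primes → GrpCat,
      (∀ P : Set Nat.Primes, ∃ x y : K P, Subgroup.closure {x, y} = ⊤) ∧
      (∀ (P : Set Nat.Primes) (p : Nat.Primes),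
        (∃ g : K P, orderOf g = (p : ℕ)) ↔ p ∈ P) ∧
      (∀ P Q : Set Nat.Primes, P ≠ Q → IsEmpty (K P ≃* K Q)) := by
  let K P := GrpCat.of (ULift (twoGeneratorGroup P))
  have hK (P : Set Nat.Primes) (p : Nat.Primes) : (∃ g : K P, orderOf g = (p : ℕ)) ↔ p ∈ P :=
    (MulEquiv.ulift.exists_orderOf_eq_iff _).trans (twoGeneratorGroup_exists_orderOf_eq_iff P p)
  refine ⟨K, fun P => ?_, hK, fun P Q hPQ => ⟨fun e => hPQ (Set.ext fun p => ?_)⟩⟩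
  · obtain ⟨x, y, hxy⟩ := exists_closure_pair_eq_top_twoGeneratorGroup P
    exact ⟨_, _, MulEquiv.ulift.symm.closure_pair_eq_top hxy⟩
  · rw [← hK P, ← hK Q, e.exists_orderOf_eq_iff]
end

section
/- Let B = ⟨a, t ∣ t⁻¹a²t = a³⟩ be the Baumslag–Solitar group BS(2,3). Then the subgroup F of B generated by the two elements t and [a, t⁻¹at] is a free group of rank 2, freely generated by t and [a, t⁻¹at]. -/
/-!
Map `B` to the HNN extension `H` of `ℤ = ⟨a⟩` in which `t` conjugates `3ℤ` onto `2ℤ`, and trade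
`c = [a, t⁻¹at]` for `z = c t⁻¹ = a⁻¹t⁻¹a⁻¹tat⁻¹a` by a Nielsen move. Spelling out a reduced word in
`t, z` gives a word in `a, t` whose only candidate pinches `t^u a^k t^(-u)` sit between two
letters, where `k = 0` only if both letters are `t^(±1)` or both are `z^(±1)`; reducedness then
forces equal signs, i.e. no pinch. By Britton's lemma a nontrivial word does not map into `⟨a⟩`.
-/

theorem FreeGroup.injective_lift_mul_right {G : Type*} [Group G] {x y : G}
    (h : Function.Injective (FreeGroup.lift fun b : Bool => if b then x else y)) :
    Function.Injective (FreeGroup.lift fun b : Bool => if b then x else y * x) := by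
  let α : FreeGroup Bool →* FreeGroup Bool :=
    FreeGroup.lift fun b => if b then of true else of false * of true
  let β : FreeGroup Bool →* FreeGroup Bool :=
    FreeGroup.lift fun b => if b then of true else of false * (of true)⁻¹
  have hβα : β.comp α = MonoidHom.id _ := by
    ext b; cases b <;> simp [α, β]
  have hcomp : FreeGroup.lift (fun b : Bool => if b then x else y * x) =
      (FreeGroup.lift fun b : Bool => if b then x else y).comp α := by
    ext b; cases b <;> simp [α]
  rw [hcomp, MonoidHom.coe_comp]
  exact h.comp (Function.LeftInverse.injective (g := β) (DFunLike.congr_fun hβα))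

theorem injective_zpowGroupHom {G : Type*} [CommGroup G] [IsMulTorsionFree G] {n : ℤ}
    (hn : n ≠ 0) : Function.Injective (zpowGroupHom n : G →* G) :=
  zpow_left_injective hn

theorem Multiplicative.mem_range_zpowGroupHom_iff {n : ℤ} {x : Multiplicative ℤ} :
    x ∈ (zpowGroupHom n).range ↔ n ∣ x.toAdd := by
  constructor
  · rintro ⟨y, rfl⟩
    exact ⟨y.toAdd, by simp⟩
  · rintro ⟨k, hk⟩
    exact ⟨ofAdd k, toAdd.injective (by simp [hk])⟩

namespace BS23

open Multiplicative HNNExtension NormalWord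

abbrev multiples (n : ℤ) : Subgroup (Multiplicative ℤ) := (zpowGroupHom n).range

noncomputable def φ : multiples 3 ≃* multiples 2 :=
  (MonoidHom.ofInjective (injective_zpowGroupHom three_ne_zero)).symm.trans
    (MonoidHom.ofInjective (injective_zpowGroupHom two_ne_zero))

theorem φ_apply (x : Multiplicative ℤ) : φ ⟨x ^ (3 : ℤ), x, rfl⟩ = ⟨x ^ (2 : ℤ), x, rfl⟩ := by
  have h3 : ⟨x ^ (3 : ℤ), x, rfl⟩ =
      MonoidHom.ofInjective (injective_zpowGroupHom three_ne_zero) x := rfl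
  rw [φ, MulEquiv.trans_apply, h3, MulEquiv.symm_apply_apply]
  rfl

abbrev H : Type := HNNExtension (Multiplicative ℤ) (multiples 3) (multiples 2) φ

noncomputable def a : H := of (ofAdd 1)

theorem of_ofAdd (k : ℤ) : (of (ofAdd k) : H) = a ^ k := by
  rw [a, ← map_zpow, ← ofAdd_zsmul, smul_eq_mul, mul_one]

theorem t_mul_a_pow_three : (t : H) * a ^ 3 = a ^ 2 * t := by
  have := t_mul_of (φ := φ) ⟨ofAdd 1 ^ (3 : ℤ), ofAdd 1, rfl⟩
  rw [φ_apply, map_zpow, map_zpow] at this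
  exact_mod_cast this

noncomputable def toHNN : BS23 →* H :=
  PresentedGroup.toGroup (f := fun b => if b then a else t) <| by
    rintro _ rfl
    have : (t : H)⁻¹ * a ^ 2 * t = a ^ 3 := by rw [mul_assoc, ← t_mul_a_pow_three]; group
    simp [bsA, bsT, this]

theorem toHNN_aB : toHNN aB = a := PresentedGroup.toGroup.of _

theorem toHNN_tB : toHNN tB = t := PresentedGroup.toGroup.of _

noncomputable def z : H := a⁻¹ * t⁻¹ * a⁻¹ * t * a * t⁻¹ * a

theorem toHNN_cB : toHNN cB = z * t := by
  simp only [cB, pcomm, map_mul, map_inv, toHNN_aB, toHNN_tB, z]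
  group

noncomputable def gen (b : Bool) : H := if b then t else z

def sgn (b : Bool) : ℤˣ := if b then 1 else -1

/- A letter `x` of a word in `gen` stands for `gen x.1 ^ (sgn x.2)`. By `block_eq_letter` it equals
`a ^ headExp x * wordProd (body x) * t ^ tExp x * a ^ (-headExp x)`; in a word, the trailing power
of `a` of each letter is merged with the head of the next letter. -/

def headExp (x : Bool × Bool) : ℤ := if x.1 then 0 else -1

def tExp (x : Bool × Bool) : ℤˣ := if x.1 then sgn x.2 else -sgn x.2

def body (x : Bool × Bool) : List (ℤˣ × Multiplicative ℤ) :=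
  if x.1 then [] else [(-sgn x.2, ofAdd (-1)), (sgn x.2, ofAdd 1)]

def nextHead : List (Bool × Bool) → ℤ
  | [] => 0
  | y :: _ => headExp y

def wordList : List (Bool × Bool) → List (ℤˣ × Multiplicative ℤ)
  | [] => []
  | x :: xs => body x ++ (tExp x, ofAdd (nextHead xs - headExp x)) :: wordList xs

noncomputable def wordProd (L : List (ℤˣ × Multiplicative ℤ)) : H :=
  (L.map fun p => t ^ (p.1 : ℤ) * of p.2).prod

theorem block_eq_letter (x : Bool × Bool) (h : ℤ) :
    a ^ headExp x * wordProd (body x) * t ^ (tExp x : ℤ) * a ^ (h - headExp x) =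
      cond x.2 (gen x.1) (gen x.1)⁻¹ * a ^ h := by
  rcases x with ⟨_ | _, _ | _⟩ <;>
    simp only [headExp, body, tExp, sgn, gen, wordProd, z, of_ofAdd, Bool.false_eq_true,
      ↓reduceIte, cond_true, cond_false, List.map_cons, List.map_nil, List.prod_cons,
      List.prod_nil, Units.val_neg, Units.val_one] <;>
    group

theorem prod_wordList (L : List (Bool × Bool)) :
    a ^ nextHead L * wordProd (wordList L) = FreeGroup.lift gen (FreeGroup.mk L) := by
  induction L with
  | nil => simp [nextHead, wordList, wordProd]
  | cons x xs ih =>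
    rw [FreeGroup.lift_mk, List.map_cons, List.prod_cons, ← FreeGroup.lift_mk, ← ih,
      ← mul_assoc, ← block_eq_letter]
    simp [nextHead.eq_2, wordList, wordProd, of_ofAdd, mul_assoc, zpow_sub, div_eq_mul_inv]

/-- The condition `ReducedWord.chain` on consecutive entries of a reduced word. -/
def NoPinch (p q : ℤˣ × Multiplicative ℤ) : Prop :=
  p.2 ∈ toSubgroup (multiples 3) (multiples 2) p.1 → p.1 = q.1

theorem ofAdd_notMem_toSubgroup {k : ℤ} (hk : k = 1 ∨ k = -1) (u : ℤˣ) :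
    ofAdd k ∉ toSubgroup (multiples 3) (multiples 2) u := by
  unfold toSubgroup
  split_ifs <;> rw [mem_range_zpowGroupHom_iff, toAdd_ofAdd] <;> omega

theorem isChain_body_append (x : Bool × Bool) {p : ℤˣ × Multiplicative ℤ}
    {l : List (ℤˣ × Multiplicative ℤ)} (h : (p :: l).IsChain NoPinch) :
    (body x ++ p :: l).IsChain NoPinch := by
  unfold body
  split_ifs
  · exact h
  · simp [NoPinch, h, ofAdd_notMem_toSubgroup]

theorem fst_of_mem_head?_wordList (y : Bool × Bool) (ys : List (Bool × Bool)) :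
    ∀ q ∈ (wordList (y :: ys)).head?, q.1 = tExp y := by
  rcases y with ⟨_ | _, _ | _⟩ <;> simp [wordList, body, tExp]

theorem fst_eq_of_ofAdd_headExp_sub_mem {x y : Bool × Bool} {u : ℤˣ}
    (h : ofAdd (headExp y - headExp x) ∈ toSubgroup (multiples 3) (multiples 2) u) :
    x.1 = y.1 := by
  by_contra hne
  refine ofAdd_notMem_toSubgroup ?_ u h
  rcases x with ⟨_ | _, _⟩ <;> rcases y with ⟨_ | _, _⟩ <;> simp_all [headExp]

theorem isChain_wordList {L : List (Bool × Bool)} (hL : FreeGroup.IsReduced L) :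
    (wordList L).IsChain NoPinch := by
  induction L with
  | nil => exact List.isChain_nil
  | cons x xs ih =>
    refine isChain_body_append x (List.isChain_cons.2 ⟨?_, ih (List.IsChain.tail hL)⟩)
    cases xs with
    | nil => simp [wordList]
    | cons y ys =>
      intro q hq hmem
      have hfst := fst_eq_of_ofAdd_headExp_sub_mem hmem
      have hsnd := (FreeGroup.isReduced_cons_cons.1 hL).1 hfst
      rw [fst_of_mem_head?_wordList y ys q hq, Prod.ext hfst hsnd]

theorem wordList_ne_nil {L : List (Bool × Bool)} (hL : L ≠ []) : wordList L ≠ [] := by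
  obtain ⟨x, xs, rfl⟩ := List.exists_cons_of_ne_nil hL
  simp [wordList]

theorem injective_lift_gen : Function.Injective (FreeGroup.lift gen) := by
  rw [injective_iff_map_eq_one]
  intro w hw
  let R : ReducedWord (Multiplicative ℤ) (multiples 3) (multiples 2) :=
    ⟨ofAdd (nextHead w.toWord), wordList w.toWord, isChain_wordList FreeGroup.isReduced_toWord⟩
  have hR : R.prod φ = 1 := by
    rw [← hw, ← FreeGroup.mk_toWord (x := w), ← prod_wordList]
    simp [R, ReducedWord.prod, wordProd, of_ofAdd]
  have hnil := ReducedWord.toList_eq_nil_of_mem_of_range φ R ⟨1, by rw [hR, map_one]⟩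
  by_contra hne
  exact wordList_ne_nil (FreeGroup.toWord_eq_nil_iff.not.2 hne) hnil

end BS23

open BS23 in
/-- The subgroup `F = ⟨t, [a, t⁻¹at]⟩` of `BS(2,3)` is free of rank 2, freely
generated by `t` and `[a, t⁻¹at]`: the homomorphism from the free group on two
generators sending them to `t` and `[a, t⁻¹at]` is injective with range `F`. -/
theorem F_free_of_rank_two :
    Function.Injective (FreeGroup.lift (fun b : Bool => if b then tB else cB)) ∧
    (FreeGroup.lift (fun b : Bool => if b then tB else cB)).range = Fsub := by
  refine ⟨?_, ?_⟩
  · have hcomp : toHNN.comp (FreeGroup.lift fun b : Bool => if b then tB else cB) =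
        FreeGroup.lift fun b : Bool => if b then HNNExtension.t else z * HNNExtension.t := by
      ext b; cases b <;> simp [toHNN_tB, toHNN_cB]
    have hinj := FreeGroup.injective_lift_mul_right injective_lift_gen
    rw [← hcomp, MonoidHom.coe_comp] at hinj
    exact hinj.of_comp
  · rw [FreeGroup.range_lift_eq_closure, Bool.range_eq, Fsub]
    simp [Set.pair_comm]
end
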